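/- arXiv:1511.02975 — 3 statements merged into one kernel-verified Lean document; each statement's English description precedes it below -/
import Mathlib

section
/- Fix γ ∈ ℝ with γ < 1/3 and define f_γ(s) := sin(s)/s − cos(s) − γ s² for s > 0. Then there exists s > 0 such that f_γ(s) > 0. (This shows the constant solution is linearly unstable below the critical curve σ² = (4/3) R³, i.e. the forbidden zone for the disordered phase.) -/
open Real

/-- If `γ < 1/3`, then `f_γ(s) = sin(s)/s − cos(s) − γ s²` is positive for some `s > 0`:
the constant (disordered) solution is linearly unstable below the critical curve
`σ² = (4/3) R³`. -/
theorem exists_unstable_mode (γ : ℝ) (hγ : γ < 1 / 3) :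
    ∃ s : ℝ, 0 < s ∧ Real.sin s / s - Real.cos s - γ * s ^ 2 > 0 := by
  set δ : ℝ := 1 / 3 - γ with hδdef
  have hδ : 0 < δ := by simp [hδdef]; linarith
  set s : ℝ := min 1 δ with hsdef
  have hs0 : 0 < s := lt_min one_pos hδ
  have hs1 : s ≤ 1 := min_le_left _ _
  have hsδ : s ≤ δ := min_le_right _ _
  clear_value s δ
  have habs : |s| ≤ 1 := by rw [abs_of_pos hs0]; exact hs1
  have hsin := abs_sub_le_iff.1 (Real.sin_bound habs)
  have hcos := abs_sub_le_iff.1 (Real.cos_bound habs)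
  rw [abs_of_pos hs0] at hsin hcos
  have hsin' : Real.sin s ≥ s - s ^ 3 / 6 - s ^ 4 * (5 / 96) := by nlinarith [hsin.2, mul_le_mul_of_nonneg_left hs1 (pow_pos hs0 4).le]
  have hcos' : Real.cos s ≤ 1 - s ^ 2 / 2 + s ^ 4 * (5 / 96) := by linarith [hcos.1]
  refine ⟨s, hs0, ?_⟩
  have hdiv : Real.sin s / s ≥ 1 - s ^ 2 / 6 - s ^ 3 * (5 / 96) := by
    rw [ge_iff_le, le_div_iff₀ hs0]
    nlinarith [hsin']
  have key : s ^ 3 * (5 / 96) + s ^ 4 * (5 / 96) < s ^ 2 * δ := by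
    have h1 : s ^ 4 ≤ s ^ 3 := by nlinarith [pow_pos hs0 3]
    have h2 : s ^ 3 ≤ s ^ 2 * δ := by nlinarith [pow_pos hs0 2]
    linarith [mul_pos (pow_pos hs0 2) hδ]
  have : γ * s ^ 2 = s ^ 2 / 3 - s ^ 2 * δ := by rw [hδdef]; ring
  nlinarith [hdiv, hcos']
end

section
/- Fix γ ∈ ℝ with γ ≥ 1/3 and define f_γ(s) := sin(s)/s − cos(s) − γ s² for s > 0. Then f_γ(s) ≤ 0 for every s > 0. (Thus above the critical curve σ² = (4/3) R³ every Fourier mode perturbation of the constant solution is non-growing.) -/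
open Real

lemma key_ineq : ∀ s : ℝ, 0 ≤ s → Real.sin s - s * Real.cos s ≤ s ^ 3 / 3 := by
  have hd : ∀ x : ℝ, HasDerivAt (fun t => t ^ 3 / 3 - (Real.sin t - t * Real.cos t))
      (x ^ 2 - x * Real.sin x) x := by
    intro x
    have h1 : HasDerivAt (fun t : ℝ => t ^ 3 / 3) (x ^ 2) x := by
      have := (hasDerivAt_pow 3 x).div_const 3
      exact this.congr_deriv (by norm_num)
    have h2 : HasDerivAt (fun t : ℝ => t * Real.cos t)
        (1 * Real.cos x + x * (-Real.sin x)) x :=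
      (hasDerivAt_id x).mul (Real.hasDerivAt_cos x)
    have h3 : HasDerivAt (fun t : ℝ => Real.sin t - t * Real.cos t)
        (Real.cos x - (1 * Real.cos x + x * (-Real.sin x))) x :=
      (Real.hasDerivAt_sin x).sub h2
    have := h1.sub h3
    exact this.congr_deriv (by ring)
  have hmono : MonotoneOn (fun t : ℝ => t ^ 3 / 3 - (Real.sin t - t * Real.cos t))
      (Set.Ici 0) := by
    apply monotoneOn_of_deriv_nonneg (convex_Ici 0)
    · exact (Continuous.continuousOn (by continuity))
    · intro x hx
      exact ((hd x).differentiableAt).differentiableWithinAt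
    · intro x hx
      rw [(hd x).deriv]
      simp only [interior_Ici, Set.mem_Ioi] at hx
      have : Real.sin x ≤ x := Real.sin_le hx.le
      nlinarith
  intro s hs
  have h0 : (fun t : ℝ => t ^ 3 / 3 - (Real.sin t - t * Real.cos t)) 0 ≤
      (fun t : ℝ => t ^ 3 / 3 - (Real.sin t - t * Real.cos t)) s :=
    hmono (Set.self_mem_Ici) hs hs
  simp at h0
  linarith

/-- If `γ ≥ 1/3`, then `f_γ(s) = sin(s)/s − cos(s) − γ s² ≤ 0` for every `s > 0`:
above the critical curve `σ² = (4/3) R³` every Fourier mode perturbation of the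
constant solution is non-growing. -/
theorem all_modes_stable (γ : ℝ) (hγ : 1 / 3 ≤ γ) :
    ∀ s : ℝ, 0 < s → Real.sin s / s - Real.cos s - γ * s ^ 2 ≤ 0 := by
  intro s hs
  have hk := key_ineq s hs.le
  have h1 : Real.sin s / s - Real.cos s ≤ s ^ 2 / 3 := by
    rw [div_sub' hs.ne', div_le_iff₀ hs]
    nlinarith
  nlinarith
end

section
/- There exists s* ∈ (2.7, 2.8) such that (s*² − 1)·sin(s*) + s*·cos(s*) = 0; equivalently, the function f₀(s) := sin(s)/s − cos(s) has a critical point (f₀'(s*) = 0) in the interval (2.7, 2.8). This critical point s* ≈ 2.7437 determines the expected number of clusters k* = s*/(2πR) ≈ 1/(2.29R) of the noiseless Hegselmann–Krause model, resolving the 2R conjecture. -/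
open Real

private lemma sin_cos_est (a : ℝ) (ha1 : (0.3 : ℝ) < π - a) (ha2 : π - a < 0.45) :
    Real.sin a ≥ (π - a) - (π - a) ^ 3 / 6 - (π - a) ^ 4 * (5 / 96) ∧
    Real.sin a ≤ (π - a) - (π - a) ^ 3 / 6 + (π - a) ^ 4 * (5 / 96) ∧
    Real.cos a ≥ -(1 - (π - a) ^ 2 / 2) - (π - a) ^ 4 * (5 / 96) ∧
    Real.cos a ≤ -(1 - (π - a) ^ 2 / 2) + (π - a) ^ 4 * (5 / 96) := by
  set u := π - a with hu
  have habs : |u| ≤ 1 := by rw [abs_of_pos (by linarith)]; linarith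
  have hs := abs_le.mp (Real.sin_bound habs)
  have hc := abs_le.mp (Real.cos_bound habs)
  rw [abs_of_pos (by linarith : (0:ℝ) < u)] at hs hc
  have hsa : Real.sin a = Real.sin u := by rw [hu, Real.sin_pi_sub]
  have hca : Real.cos a = -Real.cos u := by rw [hu, Real.cos_pi_sub, neg_neg]
  refine ⟨?_, ?_, ?_, ?_⟩
  · rw [hsa]; linarith [hs.1, mul_le_mul_of_nonneg_left (show u ≤ 1 by linarith) (le_of_lt (pow_pos (by linarith : (0:ℝ) < u) 4))]
  · rw [hsa]; linarith [hs.2, mul_le_mul_of_nonneg_left (show u ≤ 1 by linarith) (le_of_lt (pow_pos (by linarith : (0:ℝ) < u) 4))]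
  · rw [hca]; linarith [hc.2]
  · rw [hca]; linarith [hc.1]

private lemma pow_bounds {u lo hi : ℝ} (h0 : 0 < lo) (h1 : lo < u) (h2 : u < hi) :
    lo ^ 2 < u ^ 2 ∧ u ^ 2 < hi ^ 2 ∧ lo ^ 3 < u ^ 3 ∧ u ^ 3 < hi ^ 3 ∧
    lo ^ 4 < u ^ 4 ∧ u ^ 4 < hi ^ 4 := by
  have hu0 : 0 < u := lt_trans h0 h1
  exact ⟨pow_lt_pow_left₀ h1 h0.le (by norm_num), pow_lt_pow_left₀ h2 hu0.le (by norm_num),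
    pow_lt_pow_left₀ h1 h0.le (by norm_num), pow_lt_pow_left₀ h2 hu0.le (by norm_num),
    pow_lt_pow_left₀ h1 h0.le (by norm_num), pow_lt_pow_left₀ h2 hu0.le (by norm_num)⟩

/-- There exists `s* ∈ (2.7, 2.8)` with `(s*² − 1) sin(s*) + s* cos(s*) = 0`;
equivalently, `f₀(s) = sin(s)/s − cos(s)` has a critical point in `(2.7, 2.8)`.
This `s* ≈ 2.7437` determines the expected number of clusters
`k* = s*/(2πR) ≈ 1/(2.29R)`, resolving the 2R conjecture. -/
theorem exists_critical_point_of_noiseless_growth :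
    ∃ s : ℝ, s ∈ Set.Ioo (2.7 : ℝ) 2.8 ∧
      (s ^ 2 - 1) * Real.sin s + s * Real.cos s = 0 ∧
      deriv (fun t : ℝ => Real.sin t / t - Real.cos t) s = 0 := by
  have hpi1 : (3.141592 : ℝ) < π := by have := Real.pi_gt_d6; linarith
  have hpi2 : π < (3.141593 : ℝ) := by have := Real.pi_lt_d6; linarith
  -- g(2.7) > 0
  have hg27 : 0 < ((2.7:ℝ) ^ 2 - 1) * Real.sin 2.7 + 2.7 * Real.cos 2.7 := by
    obtain ⟨hsl, -, hcl, -⟩ := sin_cos_est 2.7 (by linarith) (by linarith)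
    obtain ⟨hq2l, hq2, hq3l, hq3, hq4l, hq4⟩ :=
      pow_bounds (lo := 0.441592) (hi := 0.441593) (u := π - 2.7)
        (by norm_num) (by linarith) (by linarith)
    norm_num only at hq2l hq2 hq3l hq3 hq4l hq4
    have hsin : Real.sin 2.7 ≥ 0.42525 := by linarith
    have hcos : Real.cos 2.7 ≥ -0.90449 := by linarith
    nlinarith [hsin, hcos]
  -- g(2.8) < 0
  have hg28 : ((2.8:ℝ) ^ 2 - 1) * Real.sin 2.8 + 2.8 * Real.cos 2.8 < 0 := by
    obtain ⟨-, hsu, -, hcu⟩ := sin_cos_est 2.8 (by linarith) (by linarith)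
    obtain ⟨hq2l, hq2, hq3l, hq3, hq4l, hq4⟩ :=
      pow_bounds (lo := 0.341592) (hi := 0.341593) (u := π - 2.8)
        (by norm_num) (by linarith) (by linarith)
    norm_num only at hq2l hq2 hq3l hq3 hq4l hq4
    have hsin : Real.sin 2.8 ≤ 0.33566 := by linarith
    have hcos : Real.cos 2.8 ≤ -0.94094 := by linarith
    nlinarith [hsin, hcos]
  -- IVT
  have hc : ContinuousOn (fun s : ℝ => (s ^ 2 - 1) * Real.sin s + s * Real.cos s)
      (Set.Icc 2.7 2.8) := by fun_prop
  have hmem : (0 : ℝ) ∈ Set.Ioo (((2.8:ℝ) ^ 2 - 1) * Real.sin 2.8 + 2.8 * Real.cos 2.8)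
      (((2.7:ℝ) ^ 2 - 1) * Real.sin 2.7 + 2.7 * Real.cos 2.7) := ⟨hg28, hg27⟩
  obtain ⟨s, hs, hgs⟩ := intermediate_value_Ioo' (by norm_num : (2.7:ℝ) ≤ 2.8) hc hmem
  refine ⟨s, hs, hgs, ?_⟩
  have hs0 : s ≠ 0 := by have := hs.1; positivity
  have hd : HasDerivAt (fun t : ℝ => Real.sin t / t - Real.cos t)
      ((Real.cos s * s - Real.sin s * 1) / s ^ 2 - -Real.sin s) s :=
    ((Real.hasDerivAt_sin s).div (hasDerivAt_id s) hs0).sub (Real.hasDerivAt_cos s)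
  rw [hd.deriv]
  have hgs' : (s ^ 2 - 1) * Real.sin s + s * Real.cos s = 0 := hgs
  field_simp
  linear_combination hgs'
end
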